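/- Let ν > -1/2, δ_ν = ∂_x + x - (ν+1/2)/x, and for k ∈ ℕ define the operator identity on smooth f : (0,∞) → ℝ: δ_ν^k ((1/x) f(x)) = Σ_{i=0}^{k} c_i x^{-(k-i+1)} δ_ν^i f(x), for suitable constants c_0,…,c_k depending only on k and ν (with c_k = 1). -/

import Mathlib

open Real Set

/-- The Laguerre derivative `δ_ν f(x) = f'(x) + x f(x) - ((ν+1/2)/x) f(x)`. -/
noncomputable def deltaOp (ν : ℝ) (f : ℝ → ℝ) : ℝ → ℝ :=
  fun x => deriv f x + x * f x - ((ν + 1 / 2) / x) * f x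

lemma contDiffOn_deltaOp (ν : ℝ) {f : ℝ → ℝ} (hf : ContDiffOn ℝ (⊤ : ℕ∞) f (Set.Ioi 0)) :
    ContDiffOn ℝ (⊤ : ℕ∞) (deltaOp ν f) (Set.Ioi 0) := by
  have h1 : ContDiffOn ℝ (⊤ : ℕ∞) (deriv f) (Set.Ioi 0) :=
    hf.deriv_of_isOpen isOpen_Ioi (by simp)
  exact ((h1.add (contDiffOn_id.mul hf)).sub
    ((contDiffOn_const.div contDiffOn_id (fun x hx => ne_of_gt hx)).mul hf))

lemma deltaOp_congr (ν : ℝ) {f g : ℝ → ℝ} {x : ℝ} (h : f =ᶠ[nhds x] g) :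
    deltaOp ν f x = deltaOp ν g x := by
  unfold deltaOp
  rw [h.deriv_eq, h.self_of_nhds]

lemma deltaOp_inv_pow (ν x : ℝ) (hx : 0 < x) (m : ℕ) (g : ℝ → ℝ)
    (hg : DifferentiableAt ℝ g x) :
    deltaOp ν (fun y => (y ^ m)⁻¹ * g y) x
      = (x ^ m)⁻¹ * deltaOp ν g x - m * (x ^ (m + 1))⁻¹ * g x := by
  have hx0 : x ≠ 0 := hx.ne'
  have h1 : HasDerivAt (fun y : ℝ => (y ^ m)⁻¹)
      (-(↑m * x ^ (m - 1)) / (x ^ m) ^ 2) x :=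
    (hasDerivAt_pow m x).inv (pow_ne_zero _ hx0)
  have h2 := h1.fun_mul hg.hasDerivAt
  unfold deltaOp
  rw [h2.deriv]
  rcases Nat.eq_zero_or_pos m with hm | hm
  · subst hm; simp
  · obtain ⟨n, rfl⟩ := Nat.exists_eq_add_of_lt hm
    simp only [Nat.add_sub_cancel, Nat.zero_add]
    push_cast
    field_simp
    ring

lemma deltaOp_sum (ν x : ℝ) (s : Finset ℕ) (h : ℕ → ℝ → ℝ)
    (hd : ∀ i ∈ s, DifferentiableAt ℝ (h i) x) :
    deltaOp ν (fun y => ∑ i ∈ s, h i y) x = ∑ i ∈ s, deltaOp ν (h i) x := by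
  unfold deltaOp
  rw [deriv_fun_sum hd, Finset.sum_sub_distrib, Finset.sum_add_distrib, Finset.mul_sum,
    Finset.mul_sum]

lemma deltaOp_const_mul (ν x c : ℝ) (h : ℝ → ℝ) (hd : DifferentiableAt ℝ h x) :
    deltaOp ν (fun y => c * h y) x = c * deltaOp ν h x := by
  unfold deltaOp
  rw [deriv_const_mul c hd]
  ring

theorem stmt14_aux (ν : ℝ) (k : ℕ) :
    ∃ c : ℕ → ℝ, (∀ i, k < i → c i = 0) ∧ c k = 1 ∧
      ∀ f : ℝ → ℝ, ContDiffOn ℝ (⊤ : ℕ∞) f (Set.Ioi 0) → ∀ x : ℝ, 0 < x →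
        (deltaOp ν)^[k] (fun y => (1 / y) * f y) x =
          ∑ i ∈ Finset.range (k + 1),
            c i * (x ^ (k - i + 1))⁻¹ * (deltaOp ν)^[i] f x := by
  induction k with
  | zero =>
    refine ⟨fun i => if i = 0 then 1 else 0, ?_, by simp, ?_⟩
    · intro i hi; simp only [if_neg (show ¬i = 0 by omega)]
    · intro f hf x hx
      simp [one_div]
  | succ k ih =>
    obtain ⟨c, hc0, hck, hc⟩ := ih
    refine ⟨fun i => (if i = 0 then (0:ℝ) else c (i-1)) - ((k:ℝ) - i + 1) * c i, ?_, ?_, ?_⟩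
    · intro i hi
      have h1 : c (i-1) = 0 := hc0 _ (by omega)
      have h2 : c i = 0 := hc0 _ (by omega)
      simp [h1, h2]
    · have h0 : ((k:ℝ) - (↑(k+1):ℝ) + 1) = 0 := by push_cast; ring
      simp [hck, h0]
    · intro f hf x hx
      have hsm : ∀ i, ContDiffOn ℝ (⊤ : ℕ∞) ((deltaOp ν)^[i] f) (Set.Ioi 0) := by
        intro i; induction i with
        | zero => simpa using hf
        | succ i ih2 => rw [Function.iterate_succ_apply']; exact contDiffOn_deltaOp ν ih2
      have hdiff : ∀ i, DifferentiableAt ℝ ((deltaOp ν)^[i] f) x := fun i =>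
        ((hsm i).contDiffAt (isOpen_Ioi.mem_nhds hx)).differentiableAt (by simp)
      rw [Function.iterate_succ_apply']
      have heq : (deltaOp ν)^[k] (fun y => (1/y) * f y) =ᶠ[nhds x]
          (fun y => ∑ i ∈ Finset.range (k+1),
            c i * ((y ^ (k - i + 1))⁻¹ * (deltaOp ν)^[i] f y)) := by
        filter_upwards [isOpen_Ioi.mem_nhds hx] with y hy
        rw [hc f hf y hy]
        simp [mul_assoc]
      rw [deltaOp_congr ν heq]
      have hdcore : ∀ i, DifferentiableAt ℝ
          (fun y => (y ^ (k - i + 1))⁻¹ * (deltaOp ν)^[i] f y) x := fun i =>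
        ((differentiableAt_pow (k - i + 1) :
          DifferentiableAt ℝ (fun y : ℝ => y ^ (k - i + 1)) x).inv
            (pow_ne_zero _ hx.ne')).mul (hdiff i)
      rw [deltaOp_sum ν x _ _ (fun i _ => (hdcore i).const_mul _)]
      have hterm : ∀ i ∈ Finset.range (k+1),
          deltaOp ν (fun y => c i * ((y ^ (k - i + 1))⁻¹ * (deltaOp ν)^[i] f y)) x
            = c i * ((x ^ (k - i + 1))⁻¹ * (deltaOp ν)^[i+1] f x)
              - ((k:ℝ) - i + 1) * c i * ((x ^ (k - i + 2))⁻¹ * (deltaOp ν)^[i] f x) := by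
        intro i hi
        have hik : i ≤ k := by simpa using Nat.lt_succ_iff.mp (Finset.mem_range.mp hi)
        rw [deltaOp_const_mul ν x _ _ (hdcore i),
          deltaOp_inv_pow ν x hx _ _ (hdiff i),
          Function.iterate_succ_apply' (deltaOp ν) i f]
        have hcast : ((k - i + 1 : ℕ) : ℝ) = (k:ℝ) - i + 1 := by
          push_cast [Nat.cast_sub hik]; ring
        have hexp : k - i + 1 + 1 = k - i + 2 := by omega
        rw [hcast, hexp]
        ring
      rw [Finset.sum_congr rfl hterm, Finset.sum_sub_distrib]
      -- now handle RHS
      have hrhs : ∑ i ∈ Finset.range (k + 1 + 1),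
          ((if i = 0 then (0:ℝ) else c (i-1)) - ((k:ℝ) - i + 1) * c i)
            * (x ^ (k + 1 - i + 1))⁻¹ * (deltaOp ν)^[i] f x
          = (∑ i ∈ Finset.range (k+1),
              c i * ((x ^ (k - i + 1))⁻¹ * (deltaOp ν)^[i+1] f x))
            - ∑ i ∈ Finset.range (k+1),
              ((k:ℝ) - i + 1) * c i * ((x ^ (k - i + 2))⁻¹ * (deltaOp ν)^[i] f x) := by
        have split : ∀ i ∈ Finset.range (k + 1 + 1),
            ((if i = 0 then (0:ℝ) else c (i-1)) - ((k:ℝ) - i + 1) * c i)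
              * (x ^ (k + 1 - i + 1))⁻¹ * (deltaOp ν)^[i] f x
            = (if i = 0 then (0:ℝ) else c (i-1)) * (x ^ (k + 1 - i + 1))⁻¹ * (deltaOp ν)^[i] f x
              - ((k:ℝ) - i + 1) * c i * (x ^ (k + 1 - i + 1))⁻¹ * (deltaOp ν)^[i] f x := by
          intro i _; ring
        rw [Finset.sum_congr rfl split, Finset.sum_sub_distrib]
        congr 1
        · rw [Finset.sum_range_succ']
          have h00 : (if (0:ℕ) = 0 then (0:ℝ) else c (0-1)) = 0 := by simp
          rw [h00, zero_mul, zero_mul, add_zero]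
          refine Finset.sum_congr rfl fun i hi => ?_
          have h1 : k + 1 - (i + 1) + 1 = k - i + 1 := by omega
          rw [if_neg (Nat.succ_ne_zero i), Nat.add_sub_cancel, h1]
          ring
        · rw [Finset.sum_range_succ]
          have h0 : ((k:ℝ) - (↑(k+1):ℝ) + 1) = 0 := by push_cast; ring
          rw [h0]
          simp only [zero_mul, add_zero]
          refine Finset.sum_congr rfl fun i hi => ?_
          have hik : i ≤ k := Nat.lt_succ_iff.mp (Finset.mem_range.mp hi)
          have h1 : k + 1 - i + 1 = k - i + 2 := by omega
          rw [h1]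
          ring
      rw [hrhs]

theorem stmt14 (ν : ℝ) (hν : -(1 / 2 : ℝ) < ν) (k : ℕ) :
    ∃ c : ℕ → ℝ, c k = 1 ∧
      ∀ f : ℝ → ℝ, ContDiffOn ℝ (⊤ : ℕ∞) f (Set.Ioi 0) → ∀ x : ℝ, 0 < x →
        (deltaOp ν)^[k] (fun y => (1 / y) * f y) x =
          ∑ i ∈ Finset.range (k + 1),
            c i * (x ^ (k - i + 1))⁻¹ * (deltaOp ν)^[i] f x := by
  obtain ⟨c, _, hck, hc⟩ := stmt14_aux ν k
  exact ⟨c, hck, hc⟩
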